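/- If C is an acyclic finite directed multigraph signature (no nontrivial loops: every path from an object to itself is trivial), then the category it presents is finite, i.e., has finitely many morphisms. -/
import Mathlib

open CategoryTheory

universe v u

section aux
variable {V : Type u} [Quiver.{v+1} V]

lemma transGen_path {a b : V} (h : Relation.TransGen (fun c d => Nonempty (c ⟶ d)) a b) :
    ∃ p : Quiver.Path a b, 0 < p.length := by
  induction h with
  | single h => exact ⟨Quiver.Path.nil.cons h.some, by simp⟩
  | tail _ h ih => exact ⟨ih.choose.cons h.some, by simp⟩

lemma path_finite [Finite V] (hE : ∀ a b : V, Finite (a ⟶ b))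
    (hacyclic : ∀ (a : V) (p : Quiver.Path a a), p = Quiver.Path.nil)
    (a b : V) : Finite (Quiver.Path a b) := by
  set r : V → V → Prop := fun c d => Nonempty (c ⟶ d) with hr
  have hirr : IsIrrefl V (Relation.TransGen r) := by
    constructor
    intro x hx
    obtain ⟨p, hp⟩ := transGen_path hx
    rw [hacyclic x p] at hp
    simp at hp
  have hwf : WellFounded (Relation.TransGen r) :=
    @Finite.wellFounded_of_trans_of_irrefl V _ _ inferInstance hirr
  have hwf' : WellFounded r := Subrelation.wf (fun h => Relation.TransGen.single h) hwf
  induction b using WellFounded.induction hwf' with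
  | _ b ih =>
    have : ∀ c : V, Finite ((c ⟶ b) × Quiver.Path a c) := by
      intro c
      rcases isEmpty_or_nonempty (c ⟶ b) with h | h
      · infer_instance
      · have := ih c h
        have := hE c b
        exact Finite.instProd
    have := hE
    apply Finite.of_injective
      (fun p : Quiver.Path a b =>
        (match p with
          | .nil => Sum.inl PUnit.unit
          | .cons q e => Sum.inr ⟨_, e, q⟩ : PUnit.{1} ⊕ Σ c : V, (c ⟶ b) × Quiver.Path a c))
    intro p q h
    cases p <;> cases q <;> simp_all
    obtain ⟨rfl, h2⟩ := h
    rw [heq_eq_eq, Prod.mk.injEq] at h2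
    exact ⟨heq_of_eq h2.2, heq_of_eq h2.1⟩

end aux

/-- If `V` is a finite quiver (finitely many vertices and edges) that is
acyclic (every path from a vertex to itself is the trivial path), then any category `C`
presented by it (i.e. admitting a full functor from the path category of `V` that is
surjective on objects) has finitely many morphisms. -/
theorem acyclic_signature_presents_finite_category
    (V : Type u) [Quiver.{v + 1} V] [Finite V]
    (hE : ∀ a b : V, Finite (a ⟶ b))
    (hacyclic : ∀ (a : V) (p : Quiver.Path a a), p = Quiver.Path.nil)
    (C : Type u) [Category.{v} C]
    (F : CategoryTheory.Paths V ⥤ C) [F.Full]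
    (hobj : Function.Surjective F.obj) :
    Finite (Σ a b : C, a ⟶ b) := by
  have : ∀ a b : V, Finite (Quiver.Path a b) := path_finite hE hacyclic
  have hfin : Finite (Σ a b : V, Quiver.Path a b) := by infer_instance
  apply Finite.of_surjective
    (fun x : Σ a b : V, Quiver.Path a b => (⟨F.obj x.1, F.obj x.2.1, F.map x.2.2⟩ : Σ a b : C, a ⟶ b))
  rintro ⟨x, y, f⟩
  obtain ⟨a, rfl⟩ := hobj x
  obtain ⟨b, rfl⟩ := hobj y
  obtain ⟨p, hp⟩ := F.map_surjective f
  exact ⟨⟨a, b, p⟩, by simp [hp]⟩
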